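/- arXiv:1901.06579 — 6 statements merged into one kernel-verified Lean document; each statement's English description precedes it below -/
import Mathlib

section
/- Let m ≥ 1 and define the integer sequence a_0, a_1, ..., a_{m-1} by the recurrence m^k = Σ_{j=0}^{k} a_j · C(m-j, k-j) for k = 0, 1, ..., m-1 (where C(n,c) = 0 for c < 0). Then a_j ≥ 0 for all 0 ≤ j ≤ m-1. -/
/-!
The system is lower unitriangular with matrix `C(m-j, k-j)`, whose inverse is
`(-1)^(k-j) C(m-j, k-j)`: by trinomial revision, the product collapses to alternating row sums
of Pascal's triangle. Hence `a_j = ∑_{i ≤ j} (-1)^(j-i) C(m-i, j-i) m^i`. For `j < m` the terms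
`C(m-i, j-i) m^i` increase with `i`, since `C(N+1, K+1) = C(N, K) (N+1)/(K+1) ≤ m C(N, K)`
when `N < m`, and an alternating sum of increasing nonnegative terms that ends with a plus sign
is nonnegative.
-/

open Finset

theorem Monotone.sum_range_succ_neg_one_pow_sub_mul_nonneg {R : Type*} [Ring R] [PartialOrder R]
    [IsOrderedRing R] {f : ℕ → R} (hf : Monotone f) (h0 : 0 ≤ f 0) :
    ∀ n, 0 ≤ ∑ i ∈ range (n + 1), (-1) ^ (n - i) * f i
  | 0 => by simpa using h0
  | 1 => by simpa [sum_range_succ, ← sub_eq_neg_add] using hf zero_le_one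
  | n + 2 => by
    have hpair : ∑ i ∈ range (n + 3), (-1 : R) ^ (n + 2 - i) * f i
        = ∑ i ∈ range (n + 1), (-1) ^ (n - i) * f i + (f (n + 2) - f (n + 1)) := by
      rw [sum_range_succ, sum_range_succ, add_assoc]
      congr 1
      · refine sum_congr rfl fun i hi => ?_
        rw [show n + 2 - i = n - i + 2 by grind, pow_add]
        simp
      · simp [show n + 2 - (n + 1) = 1 by omega, sub_eq_neg_add]
    rw [hpair]
    exact add_nonneg (hf.sum_range_succ_neg_one_pow_sub_mul_nonneg h0 n)
      (sub_nonneg.2 (hf (by omega)))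

section BinomTransform

variable {R : Type*} [CommRing R]

def binomTransform (n : ℕ) (a : ℕ → R) (k : ℕ) : R :=
  ∑ j ∈ range (k + 1), a j * ((n - j).choose (k - j) : R)

def binomTransformInv (n : ℕ) (b : ℕ → R) (k : ℕ) : R :=
  ∑ j ∈ range (k + 1), (-1) ^ (k - j) * (((n - j).choose (k - j) : R) * b j)

theorem Set.EqOn.of_binomTransform {n N : ℕ} {a a' : ℕ → R}
    (h : Set.EqOn (binomTransform n a) (binomTransform n a') (Set.Iio N)) :
    Set.EqOn a a' (Set.Iio N) := by
  intro k
  induction k using Nat.strong_induction_on with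
  | _ k ih =>
    intro hk
    have hk' := h hk
    simp only [binomTransform, sum_range_succ, Nat.sub_self, Nat.choose_zero_right, Nat.cast_one,
      mul_one] at hk'
    rwa [sum_congr rfl fun j hj => by rw [ih j (Finset.mem_range.1 hj) (by grind)],
      add_right_inj] at hk'

theorem Nat.choose_sub_mul_choose_sub {n i j k : ℕ} (hij : i ≤ j) (hjk : j ≤ k) :
    (n - i).choose (j - i) * (n - j).choose (k - j) =
      (n - i).choose (k - i) * (k - i).choose (j - i) := by
  rw [Nat.choose_mul (Nat.sub_le_sub_right hjk i), show n - i - (j - i) = n - j by omega,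
    show k - i - (j - i) = k - j by omega]

theorem sum_Ico_neg_one_pow_mul_choose_sub_mul_choose_sub (n i k : ℕ) (hik : i ≤ k) :
    ∑ j ∈ Ico i (k + 1),
        (-1 : R) ^ (j - i) * ((n - i).choose (j - i) * (n - j).choose (k - j) : ℕ)
      = if i = k then 1 else 0 := by
  rw [sum_Ico_eq_sum_range, show k + 1 - i = k - i + 1 by omega]
  have hterm : ∀ u ∈ range (k - i + 1), (-1 : R) ^ (i + u - i)
      * ((n - i).choose (i + u - i) * (n - (i + u)).choose (k - (i + u)) : ℕ)
      = (n - i).choose (k - i) * (((-1 : ℤ) ^ u * (k - i).choose u : ℤ) : R) := by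
    intro u hu
    rw [Nat.choose_sub_mul_choose_sub (Nat.le_add_right i u) (by grind), Nat.add_sub_cancel_left]
    push_cast
    ring
  rw [sum_congr rfl hterm, ← mul_sum, ← Int.cast_sum, Int.alternating_sum_range_choose]
  rcases hik.eq_or_lt with rfl | hlt
  · simp
  · simp [hlt.ne, Nat.sub_ne_zero_of_lt hlt]

theorem binomTransform_binomTransformInv (n : ℕ) (b : ℕ → R) (k : ℕ) :
    binomTransform n (binomTransformInv n b) k = b k := by
  simp only [binomTransform, binomTransformInv, sum_mul, range_eq_Ico]
  rw [← sum_Ico_Ico_comm 0 (k + 1) fun i j =>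
    (-1) ^ (j - i) * (((n - i).choose (j - i) : R) * b i) * ((n - j).choose (k - j) : R)]
  calc _ = ∑ i ∈ Ico 0 (k + 1), b i * ∑ j ∈ Ico i (k + 1),
        (-1 : R) ^ (j - i) * ((n - i).choose (j - i) * (n - j).choose (k - j) : ℕ) := by
        refine sum_congr rfl fun i _ => ?_
        rw [mul_sum]
        refine sum_congr rfl fun j _ => ?_
        push_cast
        ring
    _ = ∑ i ∈ Ico 0 (k + 1), b i * if i = k then 1 else 0 := by
        refine sum_congr rfl fun i hi => ?_
        rw [sum_Ico_neg_one_pow_mul_choose_sub_mul_choose_sub n i k (by grind)]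
    _ = b k := by simp

end BinomTransform

theorem Nat.choose_succ_succ_le_mul {n k m : ℕ} (h : n + 1 ≤ m) :
    (n + 1).choose (k + 1) ≤ m * n.choose k := by
  refine Nat.le_of_mul_le_mul_right ?_ k.succ_pos
  calc (n + 1).choose (k + 1) * (k + 1) = (n + 1) * n.choose k :=
        (Nat.add_one_mul_choose_eq n k).symm
    _ ≤ m * n.choose k := Nat.mul_le_mul_right _ h
    _ ≤ m * n.choose k * (k + 1) := Nat.le_mul_of_pos_right _ k.succ_pos

theorem monotone_choose_sub_mul_pow {m j : ℕ} (hj : j < m) :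
    Monotone fun i => ((m - i).choose (j - i) : ℤ) * (m : ℤ) ^ i := by
  refine monotone_nat_of_le_succ fun i => ?_
  rcases lt_or_ge i j with hij | hji
  · have hstep : (m - i).choose (j - i) ≤ m * (m - (i + 1)).choose (j - (i + 1)) := by
      rw [show m - i = m - (i + 1) + 1 by omega, show j - i = j - (i + 1) + 1 by omega]
      exact Nat.choose_succ_succ_le_mul (by omega)
    calc ((m - i).choose (j - i) : ℤ) * (m : ℤ) ^ i
        ≤ ((m * (m - (i + 1)).choose (j - (i + 1)) : ℕ) : ℤ) * (m : ℤ) ^ i := by gcongr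
      _ = ((m - (i + 1)).choose (j - (i + 1)) : ℤ) * (m : ℤ) ^ (i + 1) := by push_cast; ring
  · -- truncated subtraction turns the binomial factor into `C(m-i, 0) = 1`
    simp only [Nat.sub_eq_zero_of_le hji, Nat.sub_eq_zero_of_le (hji.trans i.le_succ),
      Nat.choose_zero_right, Nat.cast_one, one_mul]
    exact pow_le_pow_right₀ (by exact_mod_cast hj.pos) i.le_succ

theorem binomTransformInv_pow_nonneg {m j : ℕ} (hj : j < m) :
    0 ≤ binomTransformInv m (fun i => (m : ℤ) ^ i) j :=
  (monotone_choose_sub_mul_pow hj).sum_range_succ_neg_one_pow_sub_mul_nonneg (by positivity) j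

theorem stmt_3_general (m : ℕ) (a : ℕ → ℤ)
    (ha : ∀ k < m, (m : ℤ) ^ k =
      ∑ j ∈ Finset.range (k + 1), a j * (Nat.choose (m - j) (k - j) : ℤ)) :
    ∀ j < m, 0 ≤ a j := by
  have hsol : Set.EqOn a (binomTransformInv m fun i => (m : ℤ) ^ i) (Set.Iio m) :=
    Set.EqOn.of_binomTransform fun k hk =>
      (ha k hk).symm.trans (binomTransform_binomTransformInv m _ k).symm
  intro j hj
  rw [hsol hj]
  exact binomTransformInv_pow_nonneg hj

theorem stmt_3 (m : ℕ) (hm : 1 ≤ m) (a : ℕ → ℤ)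
    (ha : ∀ k < m, (m : ℤ) ^ k =
      ∑ j ∈ Finset.range (k + 1), a j * (Nat.choose (m - j) (k - j) : ℤ)) :
    ∀ j < m, 0 ≤ a j :=
  stmt_3_general m a ha
end

section
/- Let m ≥ 3 and define integers a_0, ..., a_m by m^k = Σ_{j=0}^{k} a_j · C(m-j, k-j) for k = 0, ..., m. Then for every k ≥ 2, a_k ≥ m^{k-1}. -/
theorem stmt_5 (m : ℕ) (hm : 3 ≤ m) (a : ℕ → ℤ)
    (ha : ∀ k ≤ m, (m : ℤ) ^ k =
      ∑ j ∈ Finset.range (k + 1), a j * (Nat.choose (m - j) (k - j) : ℤ)) :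
    ∀ k, 2 ≤ k → k ≤ m → (m : ℤ) ^ (k - 1) ≤ a k := by
  have key : ∀ k, k ≤ m → 0 ≤ a k ∧ (2 ≤ k → ((k : ℤ) - 1) * (m : ℤ) ^ (k - 1) ≤ a k) := by
    intro k
    induction k using Nat.strong_induction_on with
    | _ k ih =>
      intro hk
      have ha0 : a 0 = 1 := by
        have h0 := ha 0 (by omega)
        simpa using h0.symm
      rcases Nat.lt_or_ge k 2 with h2 | h2
      · interval_cases k
        · exact ⟨by rw [ha0]; norm_num, by omega⟩
        · have h1 := ha 1 (by omega)
          rw [Finset.sum_range_succ, Finset.sum_range_succ, Finset.sum_range_zero] at h1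
          simp [ha0, Nat.choose_one_right] at h1
          constructor
          · omega
          · intro h; omega
      · -- k ≥ 2
        set c : ℤ := ((m - k + 1 : ℕ) : ℤ) with hcdef
        have hc : c = (m : ℤ) - k + 1 := by
          rw [hcdef]; omega
        have e1 : (m : ℤ) ^ k
            = (∑ j ∈ Finset.range k, a j * (Nat.choose (m - j) (k - j) : ℤ)) + a k := by
          have h := ha k hk
          rw [Finset.sum_range_succ] at h
          simpa using h
        have e2 : (m : ℤ) ^ (k - 1)
            = ∑ j ∈ Finset.range k, a j * (Nat.choose (m - j) (k - 1 - j) : ℤ) := by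
          have h := ha (k - 1) (by omega)
          rwa [show k - 1 + 1 = k by omega] at h
        have expand : ∑ j ∈ Finset.range k,
              a j * (c * (Nat.choose (m - j) (k - 1 - j) : ℤ) - (Nat.choose (m - j) (k - j) : ℤ))
            = c * (m : ℤ) ^ (k - 1) - ∑ j ∈ Finset.range k, a j * (Nat.choose (m - j) (k - j) : ℤ) := by
          rw [e2, Finset.mul_sum, ← Finset.sum_sub_distrib]
          apply Finset.sum_congr rfl
          intro j _
          ring
        have last0 : a (k - 1) * (c * (Nat.choose (m - (k - 1)) (k - 1 - (k - 1)) : ℤ)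
            - (Nat.choose (m - (k - 1)) (k - (k - 1)) : ℤ)) = 0 := by
          have h1 : k - 1 - (k - 1) = 0 := by omega
          have h2 : k - (k - 1) = 1 := by omega
          rw [h1, h2, Nat.choose_zero_right, Nat.choose_one_right]
          have h3 : ((m - (k - 1) : ℕ) : ℤ) = c := by rw [hc]; omega
          rw [h3]
          ring
        have esplit : ∑ j ∈ Finset.range k,
              a j * (c * (Nat.choose (m - j) (k - 1 - j) : ℤ) - (Nat.choose (m - j) (k - j) : ℤ))
            = ∑ j ∈ Finset.range (k - 1),
              a j * (c * (Nat.choose (m - j) (k - 1 - j) : ℤ) - (Nat.choose (m - j) (k - j) : ℤ)) := by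
          rw [show k = (k - 1) + 1 by omega, Finset.sum_range_succ,
            show (k - 1) + 1 = k by omega, last0, add_zero]
        have hpow : (m : ℤ) ^ k = (m : ℤ) ^ (k - 1) * m := by
          rw [← pow_succ]
          congr 1
          omega
        have sumnn : 0 ≤ ∑ j ∈ Finset.range (k - 1),
            a j * (c * (Nat.choose (m - j) (k - 1 - j) : ℤ) - (Nat.choose (m - j) (k - j) : ℤ)) := by
          apply Finset.sum_nonneg
          intro j hj
          have hjlt : j < k - 1 := Finset.mem_range.mp hj
          have haj : 0 ≤ a j := (ih j (by omega) (by omega)).1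
          have hcc : (Nat.choose (m - j) (k - j)) ≤ (m - k + 1) * Nat.choose (m - j) (k - 1 - j) := by
            have hid := Nat.choose_succ_right_eq (m - j) (k - 1 - j)
            rw [show k - 1 - j + 1 = k - j by omega,
              show m - j - (k - 1 - j) = m - k + 1 by omega] at hid
            calc Nat.choose (m - j) (k - j)
                ≤ Nat.choose (m - j) (k - j) * (k - j) :=
                  Nat.le_mul_of_pos_right _ (by omega)
              _ = Nat.choose (m - j) (k - 1 - j) * (m - k + 1) := hid
              _ = (m - k + 1) * Nat.choose (m - j) (k - 1 - j) := Nat.mul_comm _ _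
          apply mul_nonneg haj
          have : ((Nat.choose (m - j) (k - j) : ℕ) : ℤ)
              ≤ c * (Nat.choose (m - j) (k - 1 - j) : ℤ) := by
            rw [hcdef]
            exact_mod_cast hcc
          linarith
        have ebound : ((k : ℤ) - 1) * (m : ℤ) ^ (k - 1) ≤ a k := by
          have := expand
          rw [esplit] at this
          have hmk : 0 ≤ (m : ℤ) ^ (k - 1) := by positivity
          nlinarith [e1, this, hpow, hc]
        constructor
        · have h1 : (0 : ℤ) ≤ ((k : ℤ) - 1) * (m : ℤ) ^ (k - 1) := by
            have : (0:ℤ) ≤ (m : ℤ) ^ (k - 1) := by positivity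
            nlinarith
          linarith
        · intro _; exact ebound
  intro k hk2 hkm
  have h := (key k hkm).2 hk2
  have hmk : 0 ≤ (m : ℤ) ^ (k - 1) := by positivity
  nlinarith
end

section
/- Fix natural numbers 1 ≤ ℓ ≤ k ≤ r, and let F be a family of k-element subsets of the natural numbers such that no member of F contains two elements congruent modulo r. If |F| = C(r,k)·x^k for some real x ≥ 0, then the ℓ-shadow of F satisfies |∂_ℓ(F)| ≥ C(r,ℓ)·x^ℓ. -/
/-!
For a `k`-uniform family `F`, let `H j` be the entropy of a uniformly random `j`-subset of a
uniformly random member of `F`. It is supported on the `j`-shadow, so `H j ≤ log #∂_j F`, while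
`H 0 = 0` and `H k = log #F = log (C(r, k) x ^ k)`. It therefore suffices that
`j ↦ H j - log C(r, j) - j log x` is concave, i.e. that
`H i + H (i + 2) - 2 H (i + 1) ≤ log ((i + 1) (r - i - 1) / ((i + 2) (r - i)))`.

Draw a chain `u ⊂ t ⊂ s` with `#s = i + 2` by taking `s` from the `(i + 2)`-marginal and removing
two of its points in random order, and let `t' = u ∪ (s \ t)` be the other set between `u` and `s`.
Gibbs' inequality compares the law of `(u, t, t')` with the coupling in which `t` and `t'` are
conditionally independent given `u`: the entropy terms give the left-hand side above, and since `t'`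
never gets the color that `t` adds to `u`, Cauchy–Schwarz over the `r - i` colors missing from `u`
bounds the total mass of the coupling by `(r - i - 1) / (r - i)`.
-/

open Finset Real

lemma nonneg_of_concave {G : ℕ → ℝ} {k : ℕ}
    (hG : ∀ i, i + 2 ≤ k → G i + G (i + 2) ≤ 2 * G (i + 1))
    (h0 : 0 ≤ G 0) (hk : 0 ≤ G k) {ℓ : ℕ} (hℓ : ℓ ≤ k) : 0 ≤ G ℓ := by
  have hD : ∀ i j, i ≤ j → j < k → G (j + 1) - G j ≤ G (i + 1) - G i := by
    intro i j hij hjk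
    induction j, hij using Nat.le_induction with
    | base => exact le_rfl
    | succ j hij ih => linarith [hG j (by omega), ih (by omega)]
  rcases hℓ.eq_or_lt with rfl | hℓk
  · exact hk
  rcases le_or_gt 0 (G (ℓ + 1) - G ℓ) with hDℓ | hDℓ
  · have : 0 ≤ ∑ i ∈ range ℓ, (G (i + 1) - G i) :=
      sum_nonneg fun i hi => hDℓ.trans (hD i ℓ (mem_range.1 hi).le hℓk)
    linarith [sum_range_sub G ℓ]
  · have : ∑ i ∈ range (k - ℓ), (G (ℓ + (i + 1)) - G (ℓ + i)) ≤ 0 :=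
      sum_nonpos fun i hi => (hD ℓ (ℓ + i) (by omega) (by simp at hi; omega)).trans hDℓ.le
    have htelescope := sum_range_sub (fun i => G (ℓ + i)) (k - ℓ)
    rw [Nat.add_sub_cancel' hℓ, add_zero] at htelescope
    linarith

lemma cast_choose_succ_mul {n j : ℕ} (hj : j ≤ n) :
    (n.choose (j + 1) : ℝ) * (j + 1) = n.choose j * (n - j) := by
  rw [← Nat.cast_sub hj]
  exact_mod_cast Nat.choose_succ_right_eq n j

lemma log_choose_add_log_choose {n i : ℕ} (hi : i + 2 ≤ n) :
    log (n.choose i) + log (n.choose (i + 2)) + log (i + 2) + log ((n : ℝ) - i)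
      = 2 * log (n.choose (i + 1)) + log (i + 1) + log ((n : ℝ) - i - 1) := by
  have hn : (i : ℝ) + 2 ≤ n := by exact_mod_cast hi
  have h₁ := congrArg log (cast_choose_succ_mul (n := n) (j := i) (by omega))
  have h₂ := congrArg log (cast_choose_succ_mul (n := n) (j := i + 1) (by omega))
  have := Nat.choose_pos (n := n) (k := i) (by omega)
  have := Nat.choose_pos (n := n) (k := i + 1) (by omega)
  have := Nat.choose_pos (n := n) (k := i + 2) (by omega)
  push_cast at h₁ h₂
  rw [log_mul (by positivity) (by positivity), log_mul (by positivity) (by linarith)] at h₁ h₂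
  rw [show (i : ℝ) + 1 + 1 = i + 2 by ring, show (n : ℝ) - (i + 1) = n - i - 1 by ring] at h₂
  linarith

lemma card_mul_sum_mul_sum_filter_ne_le {ι κ : Type*} [DecidableEq κ] (E : Finset ι)
    (h : ι → ℝ) (ρ : ι → κ) {L : Finset κ} (hρ : ∀ t ∈ E, ρ t ∈ L) :
    #L * ∑ t ∈ E, h t * ∑ t' ∈ E with ρ t' ≠ ρ t, h t' ≤ (#L - 1) * (∑ t ∈ E, h t) ^ 2 := by
  set Q : κ → ℝ := fun c => ∑ t ∈ E with ρ t = c, h t with hQ_def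
  have hQ : ∑ c ∈ L, Q c = ∑ t ∈ E, h t := sum_fiberwise_of_maps_to hρ h
  have hQsq : ∑ t ∈ E, h t * Q (ρ t) = ∑ c ∈ L, Q c ^ 2 := by
    rw [← sum_fiberwise_of_maps_to hρ]
    refine sum_congr rfl fun c _ => ?_
    rw [sq, hQ_def, sum_mul]
    exact sum_congr rfl fun t ht => by rw [(mem_filter.1 ht).2]
  have hsplit : ∀ t ∈ E, h t * ∑ t' ∈ E with ρ t' ≠ ρ t, h t'
      = h t * ∑ t' ∈ E, h t' - h t * Q (ρ t) := fun t _ => by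
    rw [← sum_filter_add_sum_filter_not E (fun t' => ρ t' = ρ t)]
    ring
  have hCS := sq_sum_le_card_mul_sum_sq (s := L) (f := Q)
  rw [sum_congr rfl hsplit, sum_sub_distrib, ← sum_mul, hQsq, ← sq]
  rw [hQ] at hCS
  linarith

lemma mul_log_div_le_sub {w v : ℝ} (hw : 0 < w) (hv : 0 < v) : w * log (v / w) ≤ v - w :=
  calc w * log (v / w) ≤ w * (v / w - 1) :=
        mul_le_mul_of_nonneg_left (log_le_sub_one_of_pos (div_pos hv hw)) hw.le
    _ = v - w := by field_simp

lemma sum_negMulLog_le_log_card {ι : Type*} {A : Finset ι} {p : ι → ℝ}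
    (hp : ∀ i ∈ A, 0 < p i) (hsum : ∑ i ∈ A, p i = 1) :
    ∑ i ∈ A, negMulLog (p i) ≤ log #A := by
  have hA : (0 : ℝ) < #A := by
    rcases A.eq_empty_or_nonempty with rfl | hA
    · simp at hsum
    · exact_mod_cast hA.card_pos
  have key : ∀ i ∈ A, negMulLog (p i) - p i * log #A ≤ (#A : ℝ)⁻¹ - p i := fun i hi => by
    have := mul_log_div_le_sub (hp i hi) (inv_pos.2 hA)
    rw [log_div (inv_pos.2 hA).ne' (hp i hi).ne', log_inv] at this
    rw [negMulLog]
    linarith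
  have := sum_le_sum key
  rw [sum_sub_distrib, sum_sub_distrib, ← sum_mul, hsum, sum_const, nsmul_eq_mul,
    mul_inv_cancel₀ hA.ne'] at this
  linarith

namespace RainbowShadow

variable {α : Type*} [DecidableEq α]

def shadowLevel (F : Finset (Finset α)) (j : ℕ) : Finset (Finset α) :=
  F.biUnion (powersetCard j)

def degree (F : Finset (Finset α)) (t : Finset α) : ℕ := #{s ∈ F | t ⊆ s}

/-- For a `k`-uniform family `F`, the law of a uniformly random `j`-subset of a uniformly
random member of `F`. -/
noncomputable def marginal (F : Finset (Finset α)) (k j : ℕ) (t : Finset α) : ℝ :=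
  degree F t / (#F * k.choose j)

noncomputable def entropy (F : Finset (Finset α)) (k j : ℕ) : ℝ :=
  ∑ t ∈ shadowLevel F j, negMulLog (marginal F k j t)

variable {F : Finset (Finset α)} {k i j : ℕ} {s t u : Finset α}

lemma mem_shadowLevel : t ∈ shadowLevel F j ↔ ∃ s ∈ F, t ⊆ s ∧ #t = j := by
  simp [shadowLevel]

lemma card_of_mem_shadowLevel (ht : t ∈ shadowLevel F j) : #t = j := by
  obtain ⟨-, -, -, h⟩ := mem_shadowLevel.1 ht
  exact h

lemma mem_shadowLevel_of_subset (ht : t ∈ shadowLevel F j) (hut : u ⊆ t) (hu : #u = i) :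
    u ∈ shadowLevel F i := by
  obtain ⟨s, hs, hts, -⟩ := mem_shadowLevel.1 ht
  exact mem_shadowLevel.2 ⟨s, hs, hut.trans hts, hu⟩

lemma injOn_of_mem_shadowLevel {κ : Type*} {c : α → κ} (hc : ∀ s ∈ F, Set.InjOn c s)
    (ht : t ∈ shadowLevel F j) : Set.InjOn c t := by
  obtain ⟨s, hs, hts, -⟩ := mem_shadowLevel.1 ht
  exact (hc s hs).mono (coe_subset.2 hts)

lemma sum_shadowLevel_powersetCard_comm {β : Type*} [AddCommMonoid β] {I J : ℕ}
    (g : Finset α → Finset α → β) :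
    ∑ s ∈ shadowLevel F J, ∑ t ∈ s.powersetCard I, g t s
      = ∑ t ∈ shadowLevel F I, ∑ s ∈ shadowLevel F J with t ⊆ s, g t s :=
  sum_comm' fun s t => by
    simp only [mem_powersetCard, mem_filter]
    exact ⟨fun ⟨hs, hts, ht⟩ => ⟨⟨hs, hts⟩, mem_shadowLevel_of_subset hs hts ht⟩,
      fun ⟨⟨hs, hts⟩, ht⟩ => ⟨hs, hts, card_of_mem_shadowLevel ht⟩⟩

lemma marginal_nonneg (k j : ℕ) (t : Finset α) : 0 ≤ marginal F k j t := by
  unfold marginal; positivity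

lemma shadowLevel_of_sized (hF : (F : Set (Finset α)).Sized k) : shadowLevel F k = F := by
  ext s
  refine ⟨fun hs => ?_, fun hs => mem_shadowLevel.2 ⟨s, hs, subset_rfl, hF hs⟩⟩
  obtain ⟨f, hf, hsf, hs⟩ := mem_shadowLevel.1 hs
  rwa [eq_of_subset_of_card_le hsf (by rw [hF hf, hs])]

lemma shadowLevel_zero (hne : F.Nonempty) : shadowLevel F 0 = {∅} := by
  ext t
  simp only [mem_shadowLevel, card_eq_zero, mem_singleton]
  refine ⟨fun ⟨_, _, _, h⟩ => h, ?_⟩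
  rintro rfl
  obtain ⟨s, hs⟩ := hne
  exact ⟨s, hs, empty_subset s, rfl⟩

lemma degree_pos (ht : t ∈ shadowLevel F j) : 0 < degree F t := by
  obtain ⟨s, hs, hts, -⟩ := mem_shadowLevel.1 ht
  exact card_pos.2 ⟨s, mem_filter.2 ⟨hs, hts⟩⟩

lemma sum_degree_shadowLevel (hF : (F : Set (Finset α)).Sized k) (j : ℕ) :
    ∑ t ∈ shadowLevel F j, degree F t = #F * k.choose j := by
  calc ∑ t ∈ shadowLevel F j, degree F t
      = ∑ t ∈ shadowLevel F j, ∑ s ∈ shadowLevel F k with t ⊆ s, 1 := by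
        simp only [degree, card_eq_sum_ones, shadowLevel_of_sized hF]
    _ = ∑ s ∈ F, ∑ t ∈ s.powersetCard j, 1 := by
        rw [← sum_shadowLevel_powersetCard_comm, shadowLevel_of_sized hF]
    _ = #F * k.choose j := by
        rw [sum_congr rfl fun s hs => by rw [← card_eq_sum_ones, card_powersetCard, hF hs],
          sum_const, smul_eq_mul]

lemma sum_degree_supersets (hF : (F : Set (Finset α)).Sized k) (ht : #t = j) :
    ∑ s ∈ shadowLevel F (j + 1) with t ⊆ s, degree F s = (k - j) * degree F t := by
  calc ∑ s ∈ shadowLevel F (j + 1) with t ⊆ s, degree F s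
      = ∑ s ∈ shadowLevel F (j + 1) with t ⊆ s, ∑ f ∈ F with s ⊆ f, 1 := by
        simp only [degree, card_eq_sum_ones]
    _ = ∑ f ∈ F with t ⊆ f, ∑ s ∈ f.powersetCard (j + 1) with t ⊆ s, 1 :=
        sum_comm' fun s f => by
          simp only [mem_filter, mem_powersetCard, mem_shadowLevel]
          constructor
          · rintro ⟨⟨⟨-, -, -, hs⟩, hts⟩, hf, hsf⟩
            exact ⟨⟨⟨hsf, hs⟩, hts⟩, hf, hts.trans hsf⟩
          · rintro ⟨⟨⟨hsf, hs⟩, hts⟩, hf, -⟩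
            exact ⟨⟨⟨f, hf, hsf, hs⟩, hts⟩, hf, hsf⟩
    _ = ∑ f ∈ F with t ⊆ f, (k - j) := by
        refine sum_congr rfl fun f hf => ?_
        obtain ⟨hf, htf⟩ := mem_filter.1 hf
        rw [← card_eq_sum_ones, card_filter_powersetCard_subset _ _ _ htf (by omega), hF hf, ht,
          Nat.add_sub_cancel_left, Nat.choose_one_right]
    _ = (k - j) * degree F t := by rw [sum_const, smul_eq_mul, mul_comm, degree]

lemma marginal_pos (hF : (F : Set (Finset α)).Sized k) (ht : t ∈ shadowLevel F j) :
    0 < marginal F k j t := by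
  obtain ⟨s, hs, hts, rfl⟩ := mem_shadowLevel.1 ht
  have hchoose : 0 < k.choose #t := Nat.choose_pos (hF hs ▸ card_le_card hts)
  have hdeg := degree_pos ht
  have hcard : 0 < #F := card_pos.2 ⟨s, hs⟩
  unfold marginal
  positivity

lemma sum_marginal (hF : (F : Set (Finset α)).Sized k) (hne : F.Nonempty) (hj : j ≤ k) :
    ∑ t ∈ shadowLevel F j, marginal F k j t = 1 := by
  have hsum : ∑ t ∈ shadowLevel F j, (degree F t : ℝ) = #F * k.choose j := by
    exact_mod_cast sum_degree_shadowLevel hF j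
  have : (#F : ℝ) * k.choose j ≠ 0 := by
    have := Nat.choose_pos hj
    have := hne.card_pos
    positivity
  simp only [marginal]
  rw [← sum_div, hsum, div_self this]

lemma sum_marginal_supersets (hF : (F : Set (Finset α)).Sized k) (hj : j < k) (ht : #t = j) :
    ∑ s ∈ shadowLevel F (j + 1) with t ⊆ s, marginal F k (j + 1) s
      = (j + 1) * marginal F k j t := by
  rcases F.eq_empty_or_nonempty with rfl | hne
  · simp [marginal]
  have hsum : ∑ s ∈ shadowLevel F (j + 1) with t ⊆ s, (degree F s : ℝ)
      = (k - j) * degree F t := by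
    rw [← Nat.cast_sub hj.le]
    exact_mod_cast sum_degree_supersets hF ht
  have hchoose := cast_choose_succ_mul hj.le
  have := Nat.choose_pos hj
  have := Nat.choose_pos hj.le
  have := hne.card_pos
  unfold marginal
  rw [← sum_div, hsum, mul_div_assoc', div_eq_div_iff (by positivity) (by positivity)]
  linear_combination -(degree F t : ℝ) * #F * hchoose

lemma degree_of_sized (hF : (F : Set (Finset α)).Sized k) (hs : s ∈ F) : degree F s = 1 := by
  rw [degree, card_eq_one]
  refine ⟨s, eq_singleton_iff_unique_mem.2 ⟨mem_filter.2 ⟨hs, subset_rfl⟩, fun f hf => ?_⟩⟩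
  obtain ⟨hf, hsf⟩ := mem_filter.1 hf
  exact (eq_of_subset_of_card_le hsf (by rw [hF hf, hF hs])).symm

lemma sum_marginal_mul_log_div (hF : (F : Set (Finset α)).Sized k) (hne : F.Nonempty)
    (hj : j ≤ k) {a : ℝ} (ha : 0 < a) :
    ∑ t ∈ shadowLevel F j, marginal F k j t * log (marginal F k j t / a)
      = -entropy F k j - log a := by
  have key : ∀ t ∈ shadowLevel F j, marginal F k j t * log (marginal F k j t / a)
      = -negMulLog (marginal F k j t) - marginal F k j t * log a := fun t ht => by
    rw [log_div (marginal_pos hF ht).ne' ha.ne', negMulLog]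
    ring
  rw [sum_congr rfl key, sum_sub_distrib, sum_neg_distrib, ← sum_mul, sum_marginal hF hne hj,
    entropy, one_mul]

lemma entropy_zero (hne : F.Nonempty) : entropy F k 0 = 0 := by
  have hdeg : degree F ∅ = #F := congrArg card (filter_true_of_mem fun s _ => empty_subset s)
  have hF : (#F : ℝ) ≠ 0 := by exact_mod_cast hne.card_pos.ne'
  rw [entropy, shadowLevel_zero hne, sum_singleton, marginal, hdeg, Nat.choose_zero_right,
    Nat.cast_one, mul_one, div_self hF, negMulLog_one]

lemma entropy_of_sized (hF : (F : Set (Finset α)).Sized k) : entropy F k k = log #F := by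
  have key : ∀ s ∈ F, negMulLog (marginal F k k s) = (#F : ℝ)⁻¹ * log #F := fun s hs => by
    rw [marginal, degree_of_sized hF hs, Nat.choose_self]
    simp [negMulLog, log_inv]
  rcases F.eq_empty_or_nonempty with rfl | hne
  · simp [entropy, shadowLevel_of_sized hF]
  rw [entropy, shadowLevel_of_sized hF, sum_congr rfl key, sum_const, nsmul_eq_mul, ← mul_assoc,
    mul_inv_cancel₀ (by exact_mod_cast hne.card_pos.ne'), one_mul]

lemma entropy_le_log_card (hF : (F : Set (Finset α)).Sized k) (hne : F.Nonempty) (hj : j ≤ k) :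
    entropy F k j ≤ log #(shadowLevel F j) :=
  sum_negMulLog_le_log_card (fun _ ht => marginal_pos hF ht) (sum_marginal hF hne hj)

lemma union_sdiff_mem_powersetCard (hs : #s = i + 2) (ht : t ∈ s.powersetCard (i + 1))
    (hu : u ∈ t.powersetCard i) : u ∪ (s \ t) ∈ s.powersetCard (i + 1) := by
  obtain ⟨hts, htc⟩ := mem_powersetCard.1 ht
  obtain ⟨hut, huc⟩ := mem_powersetCard.1 hu
  rw [mem_powersetCard]
  refine ⟨union_subset (hut.trans hts) sdiff_subset, ?_⟩
  rw [card_union_of_disjoint (disjoint_sdiff.mono_left hut), card_sdiff_of_subset hts]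
  omega

lemma union_sdiff_union_sdiff (hut : u ⊆ t) (hts : t ⊆ s) : u ∪ (s \ (u ∪ (s \ t))) = t := by
  ext a
  have := @hut a
  have := @hts a
  simp only [mem_union, mem_sdiff]
  tauto

noncomputable def chainSum (F : Finset (Finset α)) (i : ℕ)
    (g : Finset α → Finset α → Finset α → ℝ) : ℝ :=
  ∑ s ∈ shadowLevel F (i + 2), ∑ t ∈ s.powersetCard (i + 1), ∑ u ∈ t.powersetCard i, g u t s

section ChainSum

variable {g g₁ g₂ : Finset α → Finset α → Finset α → ℝ}

lemma chainSum_add :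
    chainSum F i (fun u t s => g₁ u t s + g₂ u t s) = chainSum F i g₁ + chainSum F i g₂ := by
  simp only [chainSum, sum_add_distrib]

lemma chainSum_sub :
    chainSum F i (fun u t s => g₁ u t s - g₂ u t s) = chainSum F i g₁ - chainSum F i g₂ := by
  simp only [chainSum, sum_sub_distrib]

lemma chainSum_mul_const (a : ℝ) :
    chainSum F i (fun u t s => g u t s * a) = chainSum F i g * a := by
  simp only [chainSum, sum_mul]

lemma chainSum_congr (h : ∀ s ∈ shadowLevel F (i + 2), ∀ t ∈ s.powersetCard (i + 1),
      ∀ u ∈ t.powersetCard i, g₁ u t s = g₂ u t s) :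
    chainSum F i g₁ = chainSum F i g₂ :=
  sum_congr rfl fun s hs => sum_congr rfl fun t ht => sum_congr rfl fun u hu => h s hs t ht u hu

lemma chainSum_mono (h : ∀ s ∈ shadowLevel F (i + 2), ∀ t ∈ s.powersetCard (i + 1),
      ∀ u ∈ t.powersetCard i, g₁ u t s ≤ g₂ u t s) :
    chainSum F i g₁ ≤ chainSum F i g₂ :=
  sum_le_sum fun s hs => sum_le_sum fun t ht => sum_le_sum fun u hu => h s hs t ht u hu

lemma chainSum_eq_sum_mid (g : Finset α → Finset α → Finset α → ℝ) :
    chainSum F i g = ∑ t ∈ shadowLevel F (i + 1), ∑ s ∈ shadowLevel F (i + 2) with t ⊆ s,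
      ∑ u ∈ t.powersetCard i, g u t s :=
  sum_shadowLevel_powersetCard_comm _

lemma chainSum_eq_sum_bot (g : Finset α → Finset α → Finset α → ℝ) :
    chainSum F i g = ∑ u ∈ shadowLevel F i, ∑ t ∈ shadowLevel F (i + 1) with u ⊆ t,
      ∑ s ∈ shadowLevel F (i + 2) with t ⊆ s, g u t s := by
  rw [chainSum_eq_sum_mid]
  exact (sum_congr rfl fun t _ => sum_comm).trans (sum_shadowLevel_powersetCard_comm
    fun u t => ∑ s ∈ shadowLevel F (i + 2) with t ⊆ s, g u t s)

/-- In a chain `u ⊂ t ⊂ s` with `#(s \ u) = 2`, the set `u ∪ (s \ t)` is the other set strictly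
between `u` and `s`. -/
lemma chainSum_union_sdiff (g : Finset α → Finset α → ℝ) :
    chainSum F i (fun u t s => g (u ∪ (s \ t)) s) = chainSum F i (fun _ t s => g t s) := by
  refine sum_congr rfl fun s hs => ?_
  have hsc := card_of_mem_shadowLevel hs
  rw [sum_sigma', sum_sigma']
  let φ : (Σ _ : Finset α, Finset α) → Σ _ : Finset α, Finset α := fun p => ⟨p.2 ∪ (s \ p.1), p.2⟩
  have hφ : ∀ p ∈ (s.powersetCard (i + 1)).sigma (powersetCard i),
      φ p ∈ (s.powersetCard (i + 1)).sigma (powersetCard i) ∧ φ (φ p) = p := by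
    rintro ⟨t, u⟩ hp
    obtain ⟨ht, hu⟩ := mem_sigma.1 hp
    refine ⟨mem_sigma.2 ⟨union_sdiff_mem_powersetCard hsc ht hu,
      mem_powersetCard.2 ⟨subset_union_left, (mem_powersetCard.1 hu).2⟩⟩, ?_⟩
    simp only [φ, union_sdiff_union_sdiff (mem_powersetCard.1 hu).1 (mem_powersetCard.1 ht).1]
  exact sum_nbij' φ φ (fun p hp => (hφ p hp).1) (fun p hp => (hφ p hp).1)
    (fun p hp => (hφ p hp).2) (fun p hp => (hφ p hp).2) fun _ _ => rfl

end ChainSum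

/-- The probability of the chain `u ⊂ t ⊂ s` when `s` is drawn from the `(i + 2)`-marginal and the
two points of `s \ u` are then removed in uniformly random order. -/
noncomputable def chainWeight (F : Finset (Finset α)) (k i : ℕ) (s : Finset α) : ℝ :=
  marginal F k (i + 2) s / ((i + 2) * (i + 1))

/-- The probability that the chain drawn according to `chainWeight` starts with `u ⊂ t`, for any
`u ⊂ t` with `#u = i`. -/
noncomputable def pairWeight (F : Finset (Finset α)) (k i : ℕ) (t : Finset α) : ℝ :=
  marginal F k (i + 1) t / (i + 1)

lemma pairWeight_nonneg (t : Finset α) : 0 ≤ pairWeight F k i t :=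
  div_nonneg (marginal_nonneg k (i + 1) t) (by positivity)

lemma sum_chainWeight_supersets (hF : (F : Set (Finset α)).Sized k) (hi : i + 2 ≤ k)
    (ht : #t = i + 1) :
    ∑ s ∈ shadowLevel F (i + 2) with t ⊆ s, chainWeight F k i s = pairWeight F k i t := by
  simp only [chainWeight, pairWeight]
  rw [← sum_div, sum_marginal_supersets hF (by omega) ht]
  push_cast
  field_simp
  ring

lemma sum_pairWeight_supersets (hF : (F : Set (Finset α)).Sized k) (hi : i < k) (hu : #u = i) :
    ∑ t ∈ shadowLevel F (i + 1) with u ⊆ t, pairWeight F k i t = marginal F k i u := by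
  simp only [pairWeight]
  rw [← sum_div, sum_marginal_supersets hF hi hu]
  field_simp

lemma chainSum_chainWeight_mul_top (f : Finset α → ℝ) :
    chainSum F i (fun _ _ s => chainWeight F k i s * f s)
      = ∑ s ∈ shadowLevel F (i + 2), marginal F k (i + 2) s * f s := by
  refine sum_congr rfl fun s hs => ?_
  have hinner : ∀ t ∈ s.powersetCard (i + 1), ∑ _u ∈ t.powersetCard i,
      chainWeight F k i s * f s = (i + 1) * (chainWeight F k i s * f s) := fun t ht => by
    rw [sum_const, card_powersetCard, (mem_powersetCard.1 ht).2, Nat.choose_succ_self_right,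
      nsmul_eq_mul, Nat.cast_add_one]
  rw [sum_congr rfl hinner, sum_const, card_powersetCard, card_of_mem_shadowLevel hs,
    Nat.choose_succ_self_right, nsmul_eq_mul, chainWeight]
  push_cast
  field_simp
  ring

lemma chainSum_chainWeight_mul_mid (hF : (F : Set (Finset α)).Sized k) (hi : i + 2 ≤ k)
    (f : Finset α → ℝ) :
    chainSum F i (fun _ t s => chainWeight F k i s * f t)
      = ∑ t ∈ shadowLevel F (i + 1), marginal F k (i + 1) t * f t := by
  rw [chainSum_eq_sum_mid]
  refine sum_congr rfl fun t ht => ?_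
  have htc := card_of_mem_shadowLevel ht
  simp only [sum_const, card_powersetCard, htc, Nat.choose_succ_self_right, nsmul_eq_mul]
  rw [← mul_sum, ← sum_mul, sum_chainWeight_supersets hF hi htc, pairWeight]
  push_cast
  field_simp

lemma chainSum_chainWeight_mul_bot (hF : (F : Set (Finset α)).Sized k) (hi : i + 2 ≤ k)
    (f : Finset α → ℝ) :
    chainSum F i (fun u _ s => chainWeight F k i s * f u)
      = ∑ u ∈ shadowLevel F i, marginal F k i u * f u := by
  rw [chainSum_eq_sum_bot]
  refine sum_congr rfl fun u hu => ?_
  have hinner : ∀ t ∈ {t ∈ shadowLevel F (i + 1) | u ⊆ t}, ∑ s ∈ shadowLevel F (i + 2) with t ⊆ s,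
      chainWeight F k i s * f u = pairWeight F k i t * f u := fun t ht => by
    rw [← sum_mul, sum_chainWeight_supersets hF hi
      (card_of_mem_shadowLevel (mem_filter.1 ht).1)]
  rw [sum_congr rfl hinner, ← sum_mul,
    sum_pairWeight_supersets hF (by omega) (card_of_mem_shadowLevel hu)]

lemma pos_of_mem_chain (hF : (F : Set (Finset α)).Sized k) (hs : s ∈ shadowLevel F (i + 2))
    (ht : t ∈ s.powersetCard (i + 1)) (hu : u ∈ t.powersetCard i) :
    0 < chainWeight F k i s ∧ 0 < pairWeight F k i t ∧ 0 < pairWeight F k i (u ∪ (s \ t)) ∧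
      0 < marginal F k i u := by
  have ht' := mem_shadowLevel_of_subset hs (mem_powersetCard.1 ht).1 (mem_powersetCard.1 ht).2
  have hu' := mem_shadowLevel_of_subset ht' (mem_powersetCard.1 hu).1 (mem_powersetCard.1 hu).2
  have hmem := union_sdiff_mem_powersetCard (card_of_mem_shadowLevel hs) ht hu
  have ht'' := mem_shadowLevel_of_subset hs (mem_powersetCard.1 hmem).1
    (mem_powersetCard.1 hmem).2
  exact ⟨div_pos (marginal_pos hF hs) (by positivity),
    div_pos (marginal_pos hF ht') (by positivity), div_pos (marginal_pos hF ht'') (by positivity),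
    marginal_pos hF hu'⟩


section Coloring

variable {κ : Type*} [DecidableEq κ] {c : α → κ}

lemma sum_supersets_le_sum_filter_image_ne (hc : ∀ s ∈ F, Set.InjOn c s)
    {g : Finset α → ℝ} (hg : ∀ t, 0 ≤ g t) (hu : #u = i) (ht : t ∈ shadowLevel F (i + 1))
    (hut : u ⊆ t) :
    ∑ s ∈ shadowLevel F (i + 2) with t ⊆ s, g (u ∪ (s \ t))
      ≤ ∑ t' ∈ {t' ∈ shadowLevel F (i + 1) | u ⊆ t'} with t'.image c ≠ t.image c, g t' := by
  have hinj : Set.InjOn (fun s => u ∪ (s \ t)) ↑({s ∈ shadowLevel F (i + 2) | t ⊆ s}) := by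
    intro s₁ hs₁ s₂ hs₂ h
    have hrec : ∀ s, t ⊆ s → t ∪ (u ∪ (s \ t)) = s := fun s hts => by
      rw [← union_assoc, union_eq_left.2 hut, union_sdiff_of_subset hts]
    rw [← hrec s₁ (mem_filter.1 hs₁).2, ← hrec s₂ (mem_filter.1 hs₂).2]
    exact congrArg (t ∪ ·) h
  rw [← sum_image hinj]
  refine sum_le_sum_of_subset_of_nonneg (fun t' ht' => ?_) fun _ _ _ => hg _
  obtain ⟨s, hs, rfl⟩ := mem_image.1 ht'
  obtain ⟨hs, hts⟩ := mem_filter.1 hs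
  have hsc := card_of_mem_shadowLevel hs
  have htc := card_of_mem_shadowLevel ht
  have hmem : u ∪ (s \ t) ∈ s.powersetCard (i + 1) := union_sdiff_mem_powersetCard hsc
    (mem_powersetCard.2 ⟨hts, htc⟩) (mem_powersetCard.2 ⟨hut, hu⟩)
  obtain ⟨a, ha⟩ : (s \ t).Nonempty := by
    rw [← card_pos, card_sdiff_of_subset hts]
    omega
  have hca : c a ∉ t.image c := fun h => by
    obtain ⟨b, hb, hba⟩ := mem_image.1 h
    rw [injOn_of_mem_shadowLevel hc hs (hts hb) (mem_sdiff.1 ha).1 hba] at hb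
    exact (mem_sdiff.1 ha).2 hb
  refine mem_filter.2 ⟨mem_filter.2 ⟨mem_shadowLevel_of_subset hs (mem_powersetCard.1 hmem).1
    (mem_powersetCard.1 hmem).2, subset_union_left⟩, fun h => hca ?_⟩
  rw [← h]
  exact mem_image_of_mem c (mem_union_right u ha)

lemma card_sub_mul_sum_mul_sum_supersets_le {K : Finset κ} (hc : ∀ s ∈ F, Set.InjOn c s)
    (hcK : ∀ a, c a ∈ K) {g : Finset α → ℝ} (hg : ∀ t, 0 ≤ g t) (hu : u ∈ shadowLevel F i) :
    ((#K : ℝ) - i) * ∑ t ∈ shadowLevel F (i + 1) with u ⊆ t,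
        g t * ∑ s ∈ shadowLevel F (i + 2) with t ⊆ s, g (u ∪ (s \ t))
      ≤ ((#K : ℝ) - i - 1) * (∑ t ∈ shadowLevel F (i + 1) with u ⊆ t, g t) ^ 2 := by
  have huc : #(u.image c) = i := by
    rw [card_image_of_injOn (injOn_of_mem_shadowLevel hc hu), card_of_mem_shadowLevel hu]
  have huK : u.image c ⊆ K := fun _ h => by
    obtain ⟨a, -, rfl⟩ := mem_image.1 h
    exact hcK a
  set L := {S ∈ K.powersetCard (i + 1) | u.image c ⊆ S}
  have hL : (#L : ℝ) = #K - i := by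
    rw [card_filter_powersetCard_subset _ _ _ huK (by omega), huc, Nat.add_sub_cancel_left,
      Nat.choose_one_right, Nat.cast_sub (huc ▸ card_le_card huK)]
  have hρ : ∀ t ∈ {t ∈ shadowLevel F (i + 1) | u ⊆ t}, t.image c ∈ L := fun t ht => by
    obtain ⟨ht, hut⟩ := mem_filter.1 ht
    refine mem_filter.2 ⟨mem_powersetCard.2 ⟨fun _ h => ?_, ?_⟩, image_subset_image hut⟩
    · obtain ⟨a, -, rfl⟩ := mem_image.1 h
      exact hcK a
    · rw [card_image_of_injOn (injOn_of_mem_shadowLevel hc ht), card_of_mem_shadowLevel ht]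
  have hCS := card_mul_sum_mul_sum_filter_ne_le _ g (·.image c) hρ
  rw [hL] at hCS
  refine le_trans (mul_le_mul_of_nonneg_left (sum_le_sum fun t ht => ?_) (hL ▸ Nat.cast_nonneg #L))
    hCS
  obtain ⟨ht, hut⟩ := mem_filter.1 ht
  exact mul_le_mul_of_nonneg_left
    (sum_supersets_le_sum_filter_image_ne hc hg (card_of_mem_shadowLevel hu) ht hut) (hg t)

lemma card_sub_mul_chainSum_le {K : Finset κ} (hF : (F : Set (Finset α)).Sized k)
    (hne : F.Nonempty) (hc : ∀ s ∈ F, Set.InjOn c s) (hcK : ∀ a, c a ∈ K) (hi : i + 2 ≤ k) :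
    ((#K : ℝ) - i) * chainSum F i (fun u t s =>
        pairWeight F k i t * pairWeight F k i (u ∪ (s \ t)) / marginal F k i u)
      ≤ (#K : ℝ) - i - 1 := by
  have key : ∀ u ∈ shadowLevel F i, ((#K : ℝ) - i) * ∑ t ∈ shadowLevel F (i + 1) with u ⊆ t,
      ∑ s ∈ shadowLevel F (i + 2) with t ⊆ s,
        pairWeight F k i t * pairWeight F k i (u ∪ (s \ t)) / marginal F k i u
        ≤ ((#K : ℝ) - i - 1) * marginal F k i u := fun u hu => by
    have hbound := card_sub_mul_sum_mul_sum_supersets_le hc hcK (g := pairWeight F k i)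
      pairWeight_nonneg hu
    rw [sum_pairWeight_supersets hF (by omega) (card_of_mem_shadowLevel hu)] at hbound
    simp only [← sum_div, ← mul_sum]
    rw [mul_div_assoc', div_le_iff₀ (marginal_pos hF hu)]
    linarith
  rw [chainSum_eq_sum_bot, mul_sum]
  calc _ ≤ ∑ u ∈ shadowLevel F i, ((#K : ℝ) - i - 1) * marginal F k i u := sum_le_sum key
    _ = (#K : ℝ) - i - 1 := by rw [← mul_sum, sum_marginal hF hne (by omega), mul_one]

lemma chainSum_mul_log_div_le {K : Finset κ} (hF : (F : Set (Finset α)).Sized k)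
    (hne : F.Nonempty) (hc : ∀ s ∈ F, Set.InjOn c s) (hcK : ∀ a, c a ∈ K) (hi : i + 2 ≤ k)
    (hkK : k ≤ #K) :
    chainSum F i (fun u t s => chainWeight F k i s * log (pairWeight F k i t
        * pairWeight F k i (u ∪ (s \ t)) / marginal F k i u / chainWeight F k i s))
      ≤ log (((#K : ℝ) - i - 1) / (#K - i)) := by
  have hn : (1 : ℝ) < #K - i := by
    have : (i : ℝ) + 2 ≤ #K := by exact_mod_cast hi.trans hkK
    linarith
  have hq : 0 < ((#K : ℝ) - i) / (#K - i - 1) := div_pos (by linarith) (by linarith)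
  have hgibbs := chainSum_mono (F := F) (i := i)
    (g₁ := fun u t s => chainWeight F k i s * log (pairWeight F k i t
        * pairWeight F k i (u ∪ (s \ t)) / marginal F k i u / chainWeight F k i s))
    (g₂ := fun u t s => pairWeight F k i t * pairWeight F k i (u ∪ (s \ t)) / marginal F k i u
      * (((#K : ℝ) - i) / (#K - i - 1)) - chainWeight F k i s * 1
      - chainWeight F k i s * log (((#K : ℝ) - i) / (#K - i - 1)))
    fun s hs t ht u hu => by
      obtain ⟨hw, hht, hht', hPu⟩ := pos_of_mem_chain hF hs ht hu
      have := mul_log_div_le_sub hw (v := pairWeight F k i t * pairWeight F k i (u ∪ (s \ t))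
        / marginal F k i u * (((#K : ℝ) - i) / (#K - i - 1))) (by positivity)
      rw [mul_div_right_comm, log_mul (by positivity) hq.ne', mul_add] at this
      linarith
  rw [chainSum_sub, chainSum_sub, chainSum_mul_const, chainSum_chainWeight_mul_top,
    chainSum_chainWeight_mul_top, ← sum_mul, ← sum_mul, sum_marginal hF hne hi] at hgibbs
  have hratio : chainSum F i (fun u t s =>
      pairWeight F k i t * pairWeight F k i (u ∪ (s \ t)) / marginal F k i u)
      * (((#K : ℝ) - i) / (#K - i - 1)) ≤ 1 := by
    rw [mul_div_assoc', div_le_one (by linarith)]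
    linarith [card_sub_mul_chainSum_le hF hne hc hcK hi]
  rw [← inv_div, log_inv]
  simp only [one_mul] at hgibbs
  linarith

theorem entropy_add_entropy_le {K : Finset κ} (hF : (F : Set (Finset α)).Sized k)
    (hne : F.Nonempty) (hc : ∀ s ∈ F, Set.InjOn c s) (hcK : ∀ a, c a ∈ K) (hi : i + 2 ≤ k)
    (hkK : k ≤ #K) :
    entropy F k i + entropy F k (i + 2) + log (i + 2) + log ((#K : ℝ) - i)
      ≤ 2 * entropy F k (i + 1) + log (i + 1) + log ((#K : ℝ) - i - 1) := by
  have hn : (1 : ℝ) < #K - i := by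
    have : (i : ℝ) + 2 ≤ #K := by exact_mod_cast hi.trans hkK
    linarith
  have hgibbs := chainSum_mul_log_div_le hF hne hc hcK hi hkK
  rw [chainSum_congr (g₂ := fun u t s => chainWeight F k i s * log (pairWeight F k i t)
      + chainWeight F k i s * log (pairWeight F k i (u ∪ (s \ t)))
      - chainWeight F k i s * log (marginal F k i u)
      - chainWeight F k i s * log (chainWeight F k i s)) fun s hs t ht u hu => by
    obtain ⟨hw, hht, hht', hPu⟩ := pos_of_mem_chain hF hs ht hu
    rw [log_div (by positivity) hw.ne', log_div (by positivity) hPu.ne',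
      log_mul hht.ne' hht'.ne']
    ring] at hgibbs
  rw [chainSum_sub, chainSum_sub, chainSum_add,
    chainSum_union_sdiff (fun t s => chainWeight F k i s * log (pairWeight F k i t)),
    chainSum_chainWeight_mul_mid hF hi, chainSum_chainWeight_mul_bot hF hi,
    chainSum_chainWeight_mul_top] at hgibbs
  simp only [pairWeight, chainWeight] at hgibbs
  have hbot := sum_marginal_mul_log_div hF hne (j := i) (by omega) one_pos
  simp only [div_one, log_one, sub_zero] at hbot
  rw [sum_marginal_mul_log_div hF hne (by omega) (by positivity),
    sum_marginal_mul_log_div hF hne hi (by positivity), hbot,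
    log_mul (by positivity) (by positivity), log_div (by linarith) (by linarith)] at hgibbs
  linarith

theorem choose_mul_pow_le_card_shadowLevel {K : Finset κ} {ℓ : ℕ}
    (hF : (F : Set (Finset α)).Sized k) (hc : ∀ s ∈ F, Set.InjOn c s) (hcK : ∀ a, c a ∈ K)
    (hkK : k ≤ #K) (hℓk : ℓ ≤ k) {x : ℝ} (hx : 0 < x)
    (hcard : (#F : ℝ) = (#K).choose k * x ^ k) :
    ((#K).choose ℓ : ℝ) * x ^ ℓ ≤ #(shadowLevel F ℓ) := by
  have hchoose : ∀ j ≤ k, (0 : ℝ) < (#K).choose j := fun j hj => by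
    exact_mod_cast Nat.choose_pos (hj.trans hkK)
  have hne : F.Nonempty := by
    rw [← card_pos, ← Nat.cast_pos (α := ℝ), hcard]
    exact mul_pos (hchoose k le_rfl) (pow_pos hx k)
  set G : ℕ → ℝ := fun j => entropy F k j - log ((#K).choose j) - j * log x
  have hconcave : ∀ i, i + 2 ≤ k → G i + G (i + 2) ≤ 2 * G (i + 1) := fun i hi => by
    have := entropy_add_entropy_le hF hne hc hcK hi hkK
    have := log_choose_add_log_choose (hi.trans hkK)
    simp only [G]
    push_cast
    linarith
  have h0 : G 0 = 0 := by simp [G, entropy_zero hne]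
  have hk : G k = 0 := by
    simp only [G]
    rw [entropy_of_sized hF, hcard, log_mul (hchoose k le_rfl).ne' (pow_pos hx k).ne', log_pow]
    ring
  have hGℓ := nonneg_of_concave hconcave h0.ge hk.ge hℓk
  have hlev : (0 : ℝ) < #(shadowLevel F ℓ) := by
    rw [Nat.cast_pos, card_pos]
    refine nonempty_of_sum_ne_zero (f := marginal F k ℓ) ?_
    rw [sum_marginal hF hne hℓk]
    exact one_ne_zero
  rw [← log_le_log_iff (mul_pos (hchoose ℓ hℓk) (pow_pos hx ℓ)) hlev,
    log_mul (hchoose ℓ hℓk).ne' (pow_pos hx ℓ).ne', log_pow]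
  linarith [entropy_le_log_card hF hne hℓk]

end Coloring

end RainbowShadow

theorem stmt_10 (r k ℓ : ℕ) (hℓ : 1 ≤ ℓ) (hℓk : ℓ ≤ k) (hkr : k ≤ r)
    (F : Finset (Finset ℕ))
    (hsize : ∀ s ∈ F, s.card = k)
    (hcol : ∀ s ∈ F, ∀ a ∈ s, ∀ b ∈ s, a ≠ b → a % r ≠ b % r)
    (x : ℝ) (hx : 0 ≤ x)
    (hcard : (F.card : ℝ) = (Nat.choose r k : ℝ) * x ^ k) :
    (Nat.choose r ℓ : ℝ) * x ^ ℓ ≤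
      ({t : Finset ℕ | t.card = ℓ ∧ ∃ s ∈ F, t ⊆ s}.ncard : ℝ) := by
  have hshadow : {t : Finset ℕ | t.card = ℓ ∧ ∃ s ∈ F, t ⊆ s}
      = ↑(RainbowShadow.shadowLevel F ℓ) := by
    ext t
    simp only [Set.mem_ofPred_eq, mem_coe, RainbowShadow.mem_shadowLevel]
    exact ⟨fun ⟨ht, s, hs, hts⟩ => ⟨s, hs, hts, ht⟩, fun ⟨s, hs, hts, ht⟩ => ⟨ht, s, hs, hts⟩⟩
  rw [hshadow, Set.ncard_coe_finset]
  rcases hx.eq_or_lt with rfl | hx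
  · rw [zero_pow (by omega), mul_zero]
    positivity
  have hc : ∀ s ∈ F, Set.InjOn (· % r) (s : Set ℕ) := fun s hs a ha b hb hab => by
    by_contra h
    exact hcol s hs a ha b hb h hab
  simpa using RainbowShadow.choose_mul_pow_le_card_shadowLevel hsize hc
    (fun a => mem_range.2 (Nat.mod_lt a (by omega))) (by simpa) hℓk hx (by simpa using hcard)
end

section
/- If G is a graph whose largest matching has size at least 4, then the number of matchings of size 2 in G is strictly greater than the number of matchings of size 1 (i.e., the number of edges). -/
/-- `M` is a matching of `G`, viewed as a finite set of edges of `G` that are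
pairwise vertex-disjoint. -/
def IsMatchingFinset {V : Type*} (G : SimpleGraph V) (M : Finset (Sym2 V)) : Prop :=
  (↑M : Set (Sym2 V)) ⊆ G.edgeSet ∧
    (↑M : Set (Sym2 V)).Pairwise (fun e f => ∀ x, x ∈ e → x ∉ f)

/-- The number of matchings of size `k` in `G`. -/
noncomputable def matchCount {V : Type*} (G : SimpleGraph V) (k : ℕ) : ℕ :=
  {M : Finset (Sym2 V) | IsMatchingFinset G M ∧ M.card = k}.ncard

/-!
Fix four edges `e 0, …, e 3` of a matching. An edge `f` meets at most two of them, so it can be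
paired with some `e i` disjoint from it; pair `e i` with `e (i + 1)` (indices mod 4). Then
`f ↦ {f, partner f}` maps edges to matchings of size 2, and it is injective because a collision
`f = partner g`, `g = partner f` would be a 2-cycle of the partner map, which has none. Its image
misses `{e 0, e 2}`, whence the strict inequality.
-/

open Function Finset

section

variable {V : Type*}

def EdgeDisjoint (e f : Sym2 V) : Prop := ∀ x ∈ e, x ∉ f

namespace EdgeDisjoint

variable {e f : Sym2 V}

theorem symm (h : EdgeDisjoint e f) : EdgeDisjoint f e := fun x hf he => h x he hf

theorem ne (h : EdgeDisjoint e f) : e ≠ f := by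
  rintro rfl
  induction e using Sym2.ind with
  | _ a b => exact h a (Sym2.mem_mk_left a b) (Sym2.mem_mk_left a b)

end EdgeDisjoint

theorem IsMatchingFinset.pairwise_edgeDisjoint {G : SimpleGraph V} {M : Finset (Sym2 V)}
    (hM : IsMatchingFinset G M) {ι : Type*} {e : ι → Sym2 V} (he : Injective e)
    (hmem : ∀ i, e i ∈ M) : Pairwise (EdgeDisjoint on e) :=
  fun _ _ hij => hM.2 (hmem _) (hmem _) (he.ne hij)

theorem Pairwise.injective_of_edgeDisjoint {ι : Type*} {e : ι → Sym2 V}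
    (he : Pairwise (EdgeDisjoint on e)) : Injective e :=
  fun _ _ hij => by_contra fun h => (he h).ne hij

/-- An edge meets at most two edges of a matching, since each endpoint lies in at most one. -/
theorem exists_edgeDisjoint {ι : Type*} [Fintype ι] (hι : 2 < Fintype.card ι)
    {e : ι → Sym2 V} (he : Pairwise (EdgeDisjoint on e)) (f : Sym2 V) :
    ∃ i, EdgeDisjoint f (e i) := by
  classical
  by_contra! hmeet
  induction f using Sym2.ind with
  | _ u v =>
  have hle (x : V) : #{i | x ∈ e i} ≤ 1 :=
    card_le_one.2 fun i hi j hj =>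
      by_contra fun hij => he hij x (mem_filter.1 hi).2 (mem_filter.1 hj).2
  have hcover : univ ⊆ univ.filter (u ∈ e ·) ∪ univ.filter (v ∈ e ·) := fun i _ => by
    have h := hmeet i
    simp only [EdgeDisjoint, Sym2.mem_iff, forall_eq_or_imp, forall_eq, not_and_or, not_not] at h
    simpa using h
  have := (card_le_card hcover).trans (card_union_le _ _)
  rw [card_univ] at this
  linarith [hle u, hle v]

theorem isMatchingFinset_singleton {G : SimpleGraph V} {e : Sym2 V} :
    IsMatchingFinset G {e} ↔ e ∈ G.edgeSet := by
  simp [IsMatchingFinset]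

theorem isMatchingFinset_pair [DecidableEq V] {G : SimpleGraph V} {e f : Sym2 V}
    (he : e ∈ G.edgeSet) (hf : f ∈ G.edgeSet) (hef : EdgeDisjoint e f) :
    IsMatchingFinset G {e, f} := by
  refine ⟨by simp [Set.insert_subset_iff, he, hf], ?_⟩
  rw [coe_pair, Set.pairwise_pair]
  exact fun _ => ⟨hef, hef.symm⟩

theorem matchCount_one (G : SimpleGraph V) : matchCount G 1 = G.edgeSet.ncard := by
  have : {M : Finset (Sym2 V) | IsMatchingFinset G M ∧ M.card = 1} =
      (fun e => {e}) '' G.edgeSet := by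
    ext M
    simp only [Set.mem_ofPred_eq, card_eq_one, Set.mem_image]
    constructor
    · rintro ⟨hM, e, rfl⟩
      exact ⟨e, isMatchingFinset_singleton.1 hM, rfl⟩
    · rintro ⟨e, he, rfl⟩
      exact ⟨isMatchingFinset_singleton.2 he, e, rfl⟩
  rw [matchCount, this, Set.ncard_image_of_injective _ singleton_injective]

theorem ncard_edgeSet_lt_matchCount_two [Finite V] [DecidableEq V] {G : SimpleGraph V}
    (p : Sym2 V → Sym2 V) (hp_edge : ∀ f ∈ G.edgeSet, p f ∈ G.edgeSet)
    (hp_disj : ∀ f ∈ G.edgeSet, EdgeDisjoint f (p f)) (hpp : ∀ f ∈ G.edgeSet, p (p f) ≠ f)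
    {t : Finset (Sym2 V)} (ht : IsMatchingFinset G t ∧ t.card = 2)
    (hmiss : ∀ f ∈ G.edgeSet, {f, p f} ≠ t) :
    G.edgeSet.ncard < matchCount G 2 := by
  set S₂ := {M : Finset (Sym2 V) | IsMatchingFinset G M ∧ M.card = 2}
  have hmaps :
      Set.MapsTo (fun f => ({f, p f} : Finset (Sym2 V))) G.edgeSet (S₂ \ {t}) := fun f hf =>
    ⟨⟨isMatchingFinset_pair hf (hp_edge f hf) (hp_disj f hf), card_pair (hp_disj f hf).ne⟩,
      hmiss f hf⟩
  have hinj : Set.InjOn (fun f => ({f, p f} : Finset (Sym2 V))) G.edgeSet := by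
    intro f hf g hg hfg
    rw [← coe_inj, coe_pair, coe_pair, Set.pair_eq_pair_iff] at hfg
    rcases hfg with ⟨h, -⟩ | ⟨hf', hg'⟩
    · exact h
    · exact absurd (by rw [hg', hf']) (hpp f hf)
  calc G.edgeSet.ncard ≤ (S₂ \ {t}).ncard :=
        Set.ncard_le_ncard_of_injOn _ hmaps hinj (Set.toFinite _)
    _ < S₂.ncard := Set.ncard_lt_ncard (Set.sdiff_singleton_ssubset.2 ht) (Set.toFinite _)

section FourCycle

variable {e : Fin 4 → Sym2 V}

open Classical in
/-- The edges `e i` are cycled, `e i ↦ e (i + 1)`; any other edge goes to some `e i`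
disjoint from it (the final `0` is unreachable when the `e i` are pairwise disjoint). -/
noncomputable def cyclePartnerIndex (e : Fin 4 → Sym2 V) (f : Sym2 V) : Fin 4 :=
  if h : ∃ i, e i = f then h.choose + 1
  else if h' : ∃ i, EdgeDisjoint f (e i) then h'.choose else 0

theorem cyclePartnerIndex_apply (he : Pairwise (EdgeDisjoint on e)) (i : Fin 4) :
    cyclePartnerIndex e (e i) = i + 1 := by
  have h : ∃ j, e j = e i := ⟨i, rfl⟩
  rw [cyclePartnerIndex, dif_pos h, he.injective_of_edgeDisjoint h.choose_spec]

theorem edgeDisjoint_cyclePartner (he : Pairwise (EdgeDisjoint on e)) (f : Sym2 V) :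
    EdgeDisjoint f (e (cyclePartnerIndex e f)) := by
  by_cases h : ∃ i, e i = f
  · obtain ⟨i, rfl⟩ := h
    rw [cyclePartnerIndex_apply he]
    exact he (by revert i; decide)
  · have h' := exists_edgeDisjoint (by simp) he f
    rw [cyclePartnerIndex, dif_neg h, dif_pos h']
    exact h'.choose_spec

theorem cyclePartner_cyclePartner_ne (he : Pairwise (EdgeDisjoint on e)) (f : Sym2 V) :
    e (cyclePartnerIndex e (e (cyclePartnerIndex e f))) ≠ f := by
  rw [cyclePartnerIndex_apply he]
  by_cases h : ∃ i, e i = f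
  · obtain ⟨i, rfl⟩ := h
    rw [cyclePartnerIndex_apply he, he.injective_of_edgeDisjoint.ne_iff]
    revert i; decide
  · exact fun h' => h ⟨_, h'⟩

theorem cyclePartner_pair_ne [DecidableEq V] (he : Pairwise (EdgeDisjoint on e)) (f : Sym2 V) :
    {f, e (cyclePartnerIndex e f)} ≠ ({e 0, e 2} : Finset (Sym2 V)) := by
  intro h
  have hf : f ∈ ({e 0, e 2} : Finset (Sym2 V)) := h ▸ mem_insert_self _ _
  have hp : e (cyclePartnerIndex e f) ∈ ({e 0, e 2} : Finset (Sym2 V)) :=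
    h ▸ mem_insert_of_mem (mem_singleton_self _)
  rw [mem_insert, mem_singleton] at hf
  rcases hf with rfl | rfl <;>
    simp [cyclePartnerIndex_apply he, he.injective_of_edgeDisjoint.eq_iff] at hp

end FourCycle

end

theorem stmt_13 {V : Type*} [Fintype V] (G : SimpleGraph V)
    (hν : ∃ M : Finset (Sym2 V), IsMatchingFinset G M ∧ 4 ≤ M.card) :
    matchCount G 1 < matchCount G 2 := by
  classical
  obtain ⟨M, hM, hcard⟩ := hν
  let e : Fin 4 → Sym2 V := fun i => M.equivFin.symm (Fin.castLE hcard i)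
  have hmem (i : Fin 4) : e i ∈ M := (M.equivFin.symm _).2
  have he : Pairwise (EdgeDisjoint on e) := hM.pairwise_edgeDisjoint
    (Subtype.val_injective.comp (M.equivFin.symm.injective.comp (Fin.castLE_injective hcard)))
    hmem
  have hedge (i : Fin 4) : e i ∈ G.edgeSet := hM.1 (hmem i)
  rw [matchCount_one]
  exact ncard_edgeSet_lt_matchCount_two (fun f => e (cyclePartnerIndex e f))
    (fun _ _ => hedge _) (fun f _ => edgeDisjoint_cyclePartner he f)
    (fun f _ => cyclePartner_cyclePartner_ne he f)
    ⟨isMatchingFinset_pair (hedge 0) (hedge 2) (he (by decide)), card_pair (he (by decide)).ne⟩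
    (fun f _ => cyclePartner_pair_ne he f)
end

section
/- For each n ≥ 1, each k with 0 ≤ k ≤ ⌊n/2⌋ − 1, and each ℓ with k < ℓ < n − k: if G is a graph with ν(G) ≥ n, then m_k(G) < m_ℓ(G). -/
open Finset

namespace Nat

theorem choose_lt_choose_succ {n r : ℕ} (h : 2 * r + 1 < n) : n.choose r < n.choose (r + 1) := by
  have hpos : 0 < n.choose r := choose_pos (by omega)
  refine Nat.lt_of_mul_lt_mul_right (a := r + 1) ?_
  rw [choose_succ_right_eq]
  exact Nat.mul_lt_mul_of_pos_left (by omega) hpos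

theorem strictMonoOn_choose (n : ℕ) : StrictMonoOn n.choose (Set.Iic (n / 2)) :=
  strictMonoOn_Iic_of_lt_succ fun r hr => by
    rw [Order.succ_eq_add_one]
    exact choose_lt_choose_succ (by omega)

theorem choose_lt_choose_of_lt_of_add_lt {n a b : ℕ} (hab : a < b) (h : a + b < n) :
    n.choose a < n.choose b := by
  have hsymm : n.choose b = n.choose (min b (n - b)) := by
    rcases min_cases b (n - b) with ⟨hc, _⟩ | ⟨hc, _⟩ <;> rw [hc]
    exact (choose_symm (by omega)).symm
  rw [hsymm]
  exact strictMonoOn_choose n (by simp only [Set.mem_Iic]; omega)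
    (by simp only [Set.mem_Iic]; omega) (by omega)

end Nat

section

variable {V : Type*}

namespace IsMatchingFinset

variable {G : SimpleGraph V} {M N : Finset (Sym2 V)}

theorem mono (hM : IsMatchingFinset G M) (h : N ⊆ M) : IsMatchingFinset G N :=
  ⟨(coe_subset.2 h).trans hM.1, hM.2.mono (coe_subset.2 h)⟩

theorem union [DecidableEq V] (hM : IsMatchingFinset G M) (hN : IsMatchingFinset G N)
    (hMN : ∀ e ∈ M, ∀ f ∈ N, ∀ x ∈ e, x ∉ f) : IsMatchingFinset G (M ∪ N) := by
  refine ⟨by simpa only [coe_union] using Set.union_subset hM.1 hN.1, ?_⟩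
  rw [coe_union, Set.pairwise_union]
  exact ⟨hM.2, hN.2, fun e he f hf _ =>
    ⟨hMN e he f hf, fun x hxf hxe => hMN e he f hf x hxe hxf⟩⟩

end IsMatchingFinset

theorem card_filter_mem_le_one [DecidableEq V] {M : Finset (Sym2 V)}
    (hM : (M : Set (Sym2 V)).Pairwise fun e f => ∀ x ∈ e, x ∉ f) (v : V) :
    #{e ∈ M | v ∈ e} ≤ 1 :=
  card_le_one.2 fun e he f hf => by
    rw [mem_filter] at he hf
    by_contra hne
    exact hM he.1 hf.1 hne v he.2 hf.2

open Classical in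
theorem card_filter_meets_le_two {M : Finset (Sym2 V)}
    (hM : (M : Set (Sym2 V)).Pairwise fun e f => ∀ x ∈ e, x ∉ f) (f : Sym2 V) :
    #{e ∈ M | ∃ x ∈ f, x ∈ e} ≤ 2 := by
  induction f using Sym2.ind with
  | _ a b =>
    have hsplit : {e ∈ M | ∃ x ∈ s(a, b), x ∈ e} = {e ∈ M | a ∈ e} ∪ {e ∈ M | b ∈ e} := by
      ext e
      simp only [mem_filter, mem_union, Sym2.mem_iff, exists_eq_or_imp, exists_eq_left]
      tauto
    rw [hsplit]
    exact (card_union_le _ _).trans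
      (Nat.add_le_add (card_filter_mem_le_one hM a) (card_filter_mem_le_one hM b))

open Classical in
noncomputable def freeEdges (M P : Finset (Sym2 V)) : Finset (Sym2 V) :=
  {e ∈ M | ∀ f ∈ P, ∀ x ∈ e, x ∉ f}

theorem mem_freeEdges {M P : Finset (Sym2 V)} {e : Sym2 V} :
    e ∈ freeEdges M P ↔ e ∈ M ∧ ∀ f ∈ P, ∀ x ∈ e, x ∉ f := by
  simp only [freeEdges, mem_filter]

theorem freeEdges_subset (M P : Finset (Sym2 V)) : freeEdges M P ⊆ M :=
  fun _ he => (mem_freeEdges.1 he).1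

theorem card_le_card_freeEdges_add {M : Finset (Sym2 V)}
    (hM : (M : Set (Sym2 V)).Pairwise fun e f => ∀ x ∈ e, x ∉ f) (P : Finset (Sym2 V)) :
    #M ≤ #(freeEdges M P) + 2 * #P := by
  classical
  have hblocked : M \ freeEdges M P ⊆ P.biUnion fun f => {e ∈ M | ∃ x ∈ f, x ∈ e} := by
    intro e he
    obtain ⟨heM, hefree⟩ := mem_sdiff.1 he
    simp only [mem_freeEdges, heM, true_and, not_forall, not_not] at hefree
    obtain ⟨f, hf, x, hxe, hxf⟩ := hefree
    exact mem_biUnion.2 ⟨f, hf, mem_filter.2 ⟨heM, x, hxf, hxe⟩⟩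
  calc #M = #(M \ freeEdges M P) + #(freeEdges M P) :=
        (card_sdiff_add_card_eq_card (freeEdges_subset M P)).symm
    _ ≤ ∑ f ∈ P, #{e ∈ M | ∃ x ∈ f, x ∈ e} + #(freeEdges M P) :=
        Nat.add_le_add_right ((card_le_card hblocked).trans card_biUnion_le) _
    _ ≤ ∑ _f ∈ P, 2 + #(freeEdges M P) :=
        Nat.add_le_add_right (sum_le_sum fun f _ => card_filter_meets_le_two hM f) _
    _ = #(freeEdges M P) + 2 * #P := by rw [sum_const, smul_eq_mul]; ring

theorem inter_subset_freeEdges_sdiff [DecidableEq V] {A M : Finset (Sym2 V)}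
    (hA : (A : Set (Sym2 V)).Pairwise fun e f => ∀ x ∈ e, x ∉ f) :
    A ∩ M ⊆ freeEdges M (A \ M) := by
  intro e he
  obtain ⟨heA, heM⟩ := mem_inter.1 he
  refine mem_freeEdges.2 ⟨heM, fun f hf => ?_⟩
  obtain ⟨hfA, hfM⟩ := mem_sdiff.1 hf
  exact hA heA hfA (ne_of_mem_of_not_mem heM hfM)

section Fintype

variable [Fintype V]

open Classical in
noncomputable def matchingsOfCard (G : SimpleGraph V) (j : ℕ) : Finset (Finset (Sym2 V)) :=
  {A | IsMatchingFinset G A ∧ #A = j}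

theorem mem_matchingsOfCard {G : SimpleGraph V} {j : ℕ} {A : Finset (Sym2 V)} :
    A ∈ matchingsOfCard G j ↔ IsMatchingFinset G A ∧ #A = j := by
  simp only [matchingsOfCard, mem_filter, mem_univ, true_and]

theorem matchCount_eq_card (G : SimpleGraph V) (j : ℕ) :
    matchCount G j = #(matchingsOfCard G j) := by
  rw [matchCount, ← Set.ncard_coe_finset]
  congr 1
  ext A
  simp only [Set.mem_ofPred_eq, mem_coe, mem_matchingsOfCard]

variable [DecidableEq V] {G : SimpleGraph V} {M P : Finset (Sym2 V)} {j k ℓ : ℕ}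

theorem card_filter_sdiff_eq (hM : IsMatchingFinset G M) (hP : IsMatchingFinset G P)
    (hPM : Disjoint P M) (hj : #P ≤ j) :
    #{A ∈ matchingsOfCard G j | A \ M = P} = (#(freeEdges M P)).choose (j - #P) := by
  rw [← card_powersetCard]
  refine card_nbij' (· ∩ M) (P ∪ ·) ?_ ?_ ?_ ?_
  · intro A hA
    simp only [mem_coe, mem_filter, mem_matchingsOfCard] at hA
    obtain ⟨⟨hA, hAj⟩, rfl⟩ := hA
    simp only [mem_coe, mem_powersetCard]
    refine ⟨inter_subset_freeEdges_sdiff hA.2, ?_⟩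
    have := card_sdiff_add_card_inter A M
    omega
  · intro S hS
    simp only [mem_coe, mem_powersetCard] at hS
    obtain ⟨hSfree, hSj⟩ := hS
    have hSM : S ⊆ M := hSfree.trans (freeEdges_subset M P)
    simp only [mem_coe, mem_filter, mem_matchingsOfCard]
    have hPS : ∀ f ∈ P, ∀ e ∈ S, ∀ x ∈ f, x ∉ e := fun f hf e he x hxf hxe =>
      (mem_freeEdges.1 (hSfree he)).2 f hf x hxe hxf
    refine ⟨⟨hP.union (hM.mono hSM) hPS, ?_⟩, ?_⟩
    · rw [card_union_of_disjoint (hPM.mono_right hSM), hSj]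
      omega
    · rw [union_sdiff_distrib, sdiff_eq_self_of_disjoint hPM, sdiff_eq_empty_iff_subset.2 hSM,
        union_empty]
  · intro A hA
    simp only [mem_coe, mem_filter] at hA
    simp only [← hA.2, sdiff_union_inter]
  · intro S hS
    simp only [mem_coe, mem_powersetCard] at hS
    simp only [union_inter_distrib_right, disjoint_iff_inter_eq_empty.1 hPM, empty_union,
      inter_eq_left.2 (hS.1.trans (freeEdges_subset M P))]

theorem card_filter_sdiff_lt (hM : IsMatchingFinset G M) (hkℓ : k < ℓ) (hkℓM : k + ℓ < #M)
    (hP : IsMatchingFinset G P) (hPM : Disjoint P M) (hPk : #P ≤ k) :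
    #{A ∈ matchingsOfCard G k | A \ M = P} < #{A ∈ matchingsOfCard G ℓ | A \ M = P} := by
  rw [card_filter_sdiff_eq hM hP hPM hPk, card_filter_sdiff_eq hM hP hPM (by omega)]
  have := card_le_card_freeEdges_add hM.2 P
  exact Nat.choose_lt_choose_of_lt_of_add_lt (by omega) (by omega)

theorem card_filter_sdiff_le (hM : IsMatchingFinset G M) (hkℓ : k < ℓ) (hkℓM : k + ℓ < #M)
    (P : Finset (Sym2 V)) :
    #{A ∈ matchingsOfCard G k | A \ M = P} ≤ #{A ∈ matchingsOfCard G ℓ | A \ M = P} := by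
  obtain hempty | ⟨A, hA⟩ := eq_empty_or_nonempty {A ∈ matchingsOfCard G k | A \ M = P}
  · simp only [hempty, card_empty, Nat.zero_le]
  obtain ⟨hAk, rfl⟩ := mem_filter.1 hA
  obtain ⟨hA, hAk⟩ := mem_matchingsOfCard.1 hAk
  have hPk : #(A \ M) ≤ k := hAk ▸ card_le_card sdiff_subset
  exact (card_filter_sdiff_lt hM hkℓ hkℓM (hA.mono sdiff_subset) sdiff_disjoint hPk).le

end Fintype

theorem matchCount_lt_of_add_lt_card [Fintype V] {G : SimpleGraph V} {M : Finset (Sym2 V)}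
    {k ℓ : ℕ} (hM : IsMatchingFinset G M) (hkℓ : k < ℓ) (hkℓM : k + ℓ < #M) :
    matchCount G k < matchCount G ℓ := by
  classical
  rw [matchCount_eq_card, matchCount_eq_card,
    card_eq_sum_card_fiberwise (f := (· \ M)) (t := univ) fun _ _ => mem_univ _,
    card_eq_sum_card_fiberwise (f := (· \ M)) (t := univ) fun _ _ => mem_univ _]
  refine sum_lt_sum (fun P _ => card_filter_sdiff_le hM hkℓ hkℓM P) ⟨∅, mem_univ _, ?_⟩
  exact card_filter_sdiff_lt hM hkℓ hkℓM ⟨by simp, by simp⟩ (disjoint_empty_left M) (by simp)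

end

theorem stmt_14_general {V : Type*} [Fintype V] (G : SimpleGraph V) (n k ℓ : ℕ)
    (hkℓ : k < ℓ) (hℓ : ℓ < n - k)
    (hν : ∃ M : Finset (Sym2 V), IsMatchingFinset G M ∧ n ≤ M.card) :
    matchCount G k < matchCount G ℓ := by
  obtain ⟨M, hM, hnM⟩ := hν
  exact matchCount_lt_of_add_lt_card hM hkℓ (by omega)

theorem stmt_14 {V : Type*} [Fintype V] (G : SimpleGraph V) (n k ℓ : ℕ)
    (hn : 1 ≤ n) (hk : k + 1 ≤ n / 2) (hkℓ : k < ℓ) (hℓ : ℓ < n - k)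
    (hν : ∃ M : Finset (Sym2 V), IsMatchingFinset G M ∧ n ≤ M.card) :
    matchCount G k < matchCount G ℓ :=
  stmt_14_general G n k ℓ hkℓ hℓ hν
end

section
/- The number of binary strings of length n over the alphabet {U, D} in which no prefix contains more D's than U's equals C(n, ⌊n/2⌋). -/
open Finset

/-- A binary string `s : Fin n → Bool` (with `true` playing the role of `U` and
`false` the role of `D`) is a left factor of a Dyck word if every prefix
contains at least as many `U`'s as `D`'s. -/
def IsDyckLeftFactor {n : ℕ} (s : Fin n → Bool) : Prop :=
  ∀ m ≤ n,
    (Finset.univ.filter (fun i : Fin n => (i : ℕ) < m ∧ s i = false)).card ≤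
      (Finset.univ.filter (fun i : Fin n => (i : ℕ) < m ∧ s i = true)).card

def cnt {n : ℕ} (s : Fin n → Bool) (b : Bool) (m : ℕ) : ℕ :=
  (Finset.univ.filter (fun i : Fin n => (i : ℕ) < m ∧ s i = b)).card

lemma isDyck_iff {n : ℕ} (s : Fin n → Bool) :
    IsDyckLeftFactor s ↔ ∀ m ≤ n, cnt s false m ≤ cnt s true m := Iff.rfl

lemma cnt_eq_sum {n : ℕ} (s : Fin n → Bool) (b : Bool) (m : ℕ) :
    cnt s b m = ∑ i : Fin n, if (i : ℕ) < m ∧ s i = b then 1 else 0 := by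
  classical
  rw [cnt, Finset.card_filter]

lemma cnt_snoc_of_le {n : ℕ} (s : Fin n → Bool) (c b : Bool) {m : ℕ} (hm : m ≤ n) :
    cnt (Fin.snoc s c) b m = cnt s b m := by
  rw [cnt_eq_sum, cnt_eq_sum, Fin.sum_univ_castSucc]
  simp only [Fin.snoc_castSucc, Fin.coe_castSucc, Fin.snoc_last, Fin.val_last]
  rw [if_neg (by omega)]
  simp

lemma cnt_snoc_top {n : ℕ} (s : Fin n → Bool) (c b : Bool) :
    cnt (Fin.snoc s c) b (n + 1) = cnt s b n + (if c = b then 1 else 0) := by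
  rw [cnt_eq_sum, cnt_eq_sum, Fin.sum_univ_castSucc]
  simp only [Fin.snoc_castSucc, Fin.coe_castSucc, Fin.snoc_last, Fin.val_last]
  congr 1
  · apply Finset.sum_congr rfl
    intro i _
    have := i.isLt
    congr 1
    simp only [eq_iff_iff]
    constructor <;> (rintro ⟨h1, h2⟩; exact ⟨by omega, h2⟩)
  · simp [Nat.lt_succ_self]

lemma cnt_total {n : ℕ} (s : Fin n → Bool) : cnt s true n + cnt s false n = n := by
  classical
  have h : ∀ b, cnt s b n = (Finset.univ.filter (fun i : Fin n => s i = b)).card := by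
    intro b
    unfold cnt
    congr 1
    apply Finset.filter_congr
    intro i _
    simp [i.isLt]
  rw [h, h]
  have := Finset.card_filter_add_card_filter_not
    (s := (Finset.univ : Finset (Fin n))) (p := fun i : Fin n => s i = true)
  simpa using this

lemma dyck_snoc {n : ℕ} (s : Fin n → Bool) (b : Bool) :
    IsDyckLeftFactor (Fin.snoc s b) ↔
      IsDyckLeftFactor s ∧ (b = true ∨ cnt s false n + 1 ≤ cnt s true n) := by
  rw [isDyck_iff, isDyck_iff]
  constructor
  · intro h
    constructor
    · intro m hm
      have := h m (by omega)
      rwa [cnt_snoc_of_le _ _ _ hm, cnt_snoc_of_le _ _ _ hm] at this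
    · have := h (n + 1) le_rfl
      rw [cnt_snoc_top, cnt_snoc_top] at this
      cases b <;> simp_all
  · rintro ⟨h, hb⟩ m hm
    rcases Nat.lt_or_ge m (n + 1) with hm' | hm'
    · have hmn : m ≤ n := by omega
      rw [cnt_snoc_of_le _ _ _ hmn, cnt_snoc_of_le _ _ _ hmn]
      exact h m hmn
    · have hmn : m = n + 1 := by omega
      subst hmn
      rw [cnt_snoc_top, cnt_snoc_top]
      rcases hb with hb | hb
      · subst hb
        have := h n le_rfl
        simp only [if_pos rfl, if_neg (by simp : ¬ (true = false))]
        omega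
      · cases b <;> simp <;> omega

lemma ncard_eq_card_filter {α : Type*} [Fintype α] (p : α → Prop) [DecidablePred p] :
    {x | p x}.ncard = (Finset.univ.filter p).card := by
  rw [Set.ncard_eq_toFinset_card', Set.toFinset_setOf]

noncomputable def dck (n j : ℕ) : ℕ :=
  {s : Fin n → Bool | IsDyckLeftFactor s ∧ cnt s false n = j}.ncard

lemma dyck_le {n : ℕ} {s : Fin n → Bool} (h : IsDyckLeftFactor s) :
    cnt s false n ≤ cnt s true n := h n le_rfl

lemma dck_zero_of_big {n j : ℕ} (h : n < 2 * j) : dck n j = 0 := by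
  classical
  rw [dck, ncard_eq_card_filter, Finset.card_eq_zero, Finset.filter_eq_empty_iff]
  rintro s - ⟨hd, hc⟩
  have h1 := dyck_le hd
  have h2 := cnt_total s
  omega

lemma dck_zero' (n : ℕ) : dck n 0 = 1 := by
  classical
  rw [dck, ncard_eq_card_filter, Finset.card_eq_one]
  refine ⟨fun _ => true, ?_⟩
  rw [Finset.eq_singleton_iff_unique_mem]
  constructor
  · simp only [Finset.mem_filter, Finset.mem_univ, true_and]
    constructor
    · intro m hm
      have : cnt (fun _ : Fin n => true) false m = 0 := by
        simp [cnt, Finset.filter_eq_empty_iff]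
      show cnt (fun _ : Fin n => true) false m ≤ cnt (fun _ : Fin n => true) true m
      omega
    · simp [cnt, Finset.filter_eq_empty_iff]
  · intro s hs
    simp only [Finset.mem_filter, Finset.mem_univ, true_and] at hs
    funext i
    by_contra hne
    have hsi : s i = false := by cases h : s i <;> simp_all
    have h0 : cnt s false n = 0 := hs.2
    rw [cnt, Finset.card_eq_zero] at h0
    exact (Finset.eq_empty_iff_forall_notMem.mp h0 i)
      (by simp [Finset.mem_filter, hsi, i.isLt])

lemma aux1 (n j a b : ℕ) (h1 : 1 ≤ j) (h2 : 2 * j ≤ n + 1) (hc : a = j - 1)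
    (htot : b + a = n) : a + 1 ≤ b := by omega

lemma dck_succ (n j : ℕ) :
    dck (n + 1) j = dck n j + if 1 ≤ j ∧ 2 * j ≤ n + 1 then dck n (j - 1) else 0 := by
  classical
  rw [dck, dck, ncard_eq_card_filter, ncard_eq_card_filter]
  rw [← Finset.card_filter_add_card_filter_not
    (s := Finset.univ.filter (fun s : Fin (n+1) → Bool => IsDyckLeftFactor s ∧ cnt s false (n+1) = j))
    (p := fun s => s (Fin.last n) = true)]
  rw [Finset.filter_filter, Finset.filter_filter]
  congr 1
  · -- last bit true
    apply Finset.card_bij' (fun (s : Fin (n+1) → Bool) _ => Fin.init s)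
      (fun (s : Fin n → Bool) _ => Fin.snoc s true)
    · rintro s hs
      simp only [Finset.mem_filter, Finset.mem_univ, true_and] at hs ⊢
      obtain ⟨⟨hd, hc⟩, hl⟩ := hs
      have hrep : s = Fin.snoc (Fin.init s) true := by
        rw [← hl]; exact (Fin.snoc_init_self s).symm
      rw [hrep, dyck_snoc] at hd
      rw [hrep, cnt_snoc_top] at hc
      simp at hc
      exact ⟨hd.1, hc⟩
    · rintro s hs
      simp only [Finset.mem_filter, Finset.mem_univ, true_and] at hs ⊢
      obtain ⟨hd, hc⟩ := hs
      refine ⟨⟨?_, ?_⟩, ?_⟩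
      · rw [dyck_snoc]; exact ⟨hd, Or.inl rfl⟩
      · rw [cnt_snoc_top]; simpa using hc
      · simp [Fin.snoc_last]
    · rintro s hs
      simp only [Finset.mem_filter, Finset.mem_univ, true_and] at hs
      rw [← hs.2]
      exact Fin.snoc_init_self s
    · rintro s hs
      funext i
      simp [Fin.init]
  · -- last bit false
    by_cases hcond : 1 ≤ j ∧ 2 * j ≤ n + 1
    · rw [if_pos hcond, dck, ncard_eq_card_filter]
      apply Finset.card_bij' (fun (s : Fin (n+1) → Bool) _ => Fin.init s)
        (fun (s : Fin n → Bool) _ => Fin.snoc s false)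
      · rintro s hs
        simp only [Finset.mem_filter, Finset.mem_univ, true_and] at hs ⊢
        obtain ⟨⟨hd, hc⟩, hl⟩ := hs
        have hl' : s (Fin.last n) = false := by cases h : s (Fin.last n) <;> simp_all
        have hrep : s = Fin.snoc (Fin.init s) false := by
          rw [← hl']; exact (Fin.snoc_init_self s).symm
        rw [hrep, dyck_snoc] at hd
        rw [hrep, cnt_snoc_top] at hc
        simp at hc
        exact ⟨hd.1, by omega⟩
      · rintro s hs
        simp only [Finset.mem_filter, Finset.mem_univ, true_and] at hs ⊢
        obtain ⟨hd, hc⟩ := hs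
        have htot := cnt_total s
        refine ⟨⟨?_, ?_⟩, ?_⟩
        · rw [dyck_snoc]
          refine ⟨hd, Or.inr ?_⟩
          obtain ⟨h1, h2⟩ := hcond
          exact aux1 n j _ _ h1 h2 hc htot
        · rw [cnt_snoc_top]
          simp only [if_pos rfl, if_true]
          omega
        · simp [Fin.snoc_last]
      · rintro s hs
        simp only [Finset.mem_filter, Finset.mem_univ, true_and] at hs
        have hl' : s (Fin.last n) = false := by
          cases h : s (Fin.last n) <;> simp_all
        rw [← hl']
        exact Fin.snoc_init_self s
      · rintro s hs
        funext i
        simp [Fin.init]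
    · rw [if_neg hcond, Finset.card_eq_zero, Finset.filter_eq_empty_iff]
      rintro s - ⟨⟨hd, hc⟩, hl⟩
      have hl' : s (Fin.last n) = false := by cases h : s (Fin.last n) <;> simp_all
      have hrep : s = Fin.snoc (Fin.init s) false := by
        rw [← hl']; exact (Fin.snoc_init_self s).symm
      have hd' := hd
      rw [hrep, dyck_snoc] at hd'
      rw [hrep, cnt_snoc_top] at hc
      simp only [if_pos rfl, if_true] at hc
      have htot := cnt_total (Fin.init s)
      have hle := dyck_le hd'.1
      rcases hd'.2 with h | h
      · simp at h
      · omega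

lemma dck_formula (n : ℕ) : ∀ j : ℕ, 2 * (j + 1) ≤ n →
    dck n (j + 1) + Nat.choose n j = Nat.choose n (j + 1) := by
  induction n with
  | zero => intro j h; omega
  | succ n ih =>
    intro j h
    rw [dck_succ, if_pos ⟨by omega, by omega⟩]
    simp only [Nat.add_sub_cancel]
    have hpas : Nat.choose (n + 1) (j + 1) = Nat.choose n j + Nat.choose n (j + 1) :=
      Nat.choose_succ_succ n j
    rcases Nat.lt_or_ge (2 * (j + 1)) (n + 1) with hlt | hge
    · -- 2 * (j+1) ≤ n
      have ih1 := ih j (by omega)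
      rcases j with _ | j'
      · have h0 : dck n 0 = 1 := dck_zero' n
        have c0 : Nat.choose n 0 = 1 := Nat.choose_zero_right n
        have c1 : Nat.choose n 1 = n := Nat.choose_one_right n
        have c0' : Nat.choose (n + 1) 0 = 1 := Nat.choose_zero_right _
        have c1' : Nat.choose (n + 1) 1 = n + 1 := Nat.choose_one_right _
        omega
      · have ih2 := ih j' (by omega)
        have hpas' : Nat.choose (n + 1) (j' + 1) = Nat.choose n j' + Nat.choose n (j' + 1) :=
          Nat.choose_succ_succ n j'
        omega
    · -- n = 2 * j + 1
      have hn : n = 2 * j + 1 := by omega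
      have hz : dck n (j + 1) = 0 := dck_zero_of_big (by omega)
      rcases j with _ | j'
      · -- n = 1
        have hn1 : n = 1 := by omega
        subst hn1
        have h1 : dck 1 0 = 1 := dck_zero' 1
        have hz1 : dck 1 1 = 0 := dck_zero_of_big (by omega)
        show dck 1 1 + dck 1 0 + Nat.choose 2 0 = Nat.choose 2 1
        rw [h1, hz1]
        decide
      · have ih2 := ih j' (by omega)
        have hsym : Nat.choose n (j' + 1 + 1) = Nat.choose n (j' + 1) := by
          have hle : j' + 1 + 1 ≤ n := by omega
          have := Nat.choose_symm hle
          rw [show n - (j' + 1 + 1) = j' + 1 by omega] at this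
          omega
        have hpas' : Nat.choose (n + 1) (j' + 1) = Nat.choose n j' + Nat.choose n (j' + 1) :=
          Nat.choose_succ_succ n j'
        omega

lemma sum_dck (n : ℕ) : ∀ m : ℕ, 2 * m ≤ n →
    ∑ j ∈ Finset.range (m + 1), dck n j = Nat.choose n m := by
  intro m
  induction m with
  | zero => intro _; simp [dck_zero']
  | succ m ih =>
    intro h
    rw [Finset.sum_range_succ, ih (by omega)]
    have := dck_formula n m (by omega)
    omega

theorem stmt_17 (n : ℕ) :
    {s : Fin n → Bool | IsDyckLeftFactor s}.ncard = Nat.choose n (n / 2) := by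
  classical
  rw [ncard_eq_card_filter]
  have hcntle : ∀ s : Fin n → Bool, cnt s false n ≤ n := by
    intro s
    have h1 : cnt s false n ≤ (Finset.univ : Finset (Fin n)).card :=
      Finset.card_filter_le _ _
    simpa using h1
  have hfib : (Finset.univ.filter (fun s : Fin n → Bool => IsDyckLeftFactor s)).card
      = ∑ j ∈ Finset.range (n + 1), dck n j := by
    rw [Finset.card_eq_sum_card_fiberwise
      (f := fun s : Fin n → Bool => cnt s false n) (t := Finset.range (n + 1))
      (fun s _ => Finset.mem_range.mpr (Nat.lt_succ_of_le (hcntle s)))]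
    apply Finset.sum_congr rfl
    intro j _
    rw [dck, ncard_eq_card_filter, Finset.filter_filter]
  rw [hfib]
  have hsub : Finset.range (n / 2 + 1) ⊆ Finset.range (n + 1) := by
    apply Finset.range_subset_range.mpr; omega
  rw [← Finset.sum_subset hsub (fun j _ hj => ?_)]
  · exact sum_dck n (n / 2) (by omega)
  · apply dck_zero_of_big
    rw [Finset.mem_range] at hj
    omega
end
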